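/- arXiv:1110.1078 — 2 statements merged into one kernel-verified Lean document; each statement's English description precedes it below -/
import Mathlib

section
/- For any s ≥ 1 and any matrix A ∈ ℝ^{m×np}, the goodness measures satisfy √s · √(ω_{b∞}(A^T A, s)) ≥ ω₂(A, s) ≥ ρ_{s²}(A); equivalently, ω₂(A,s)² ≤ s · ω_{b∞}(A^T A, s) and ω₂(A,s) ≥ ρ_{s²}(A). -/
open MeasureTheory ProbabilityTheory Finset Matrix

/-- Euclidean norm of a finitely-indexed real vector. -/
noncomputable def vnorm {ι : Type*} [Fintype ι] (v : ι → ℝ) : ℝ :=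
  Real.sqrt (∑ i, (v i) ^ 2)

/-- Euclidean norm of the `i`-th block of `x ∈ ℝ^{np}` (blocks indexed by `Fin p`). -/
noncomputable def bnorm {n p : ℕ} (x : Fin p × Fin n → ℝ) (i : Fin p) : ℝ :=
  vnorm (fun j => x (i, j))

/-- Block-ℓ1 norm: `‖x‖_{b1} = ∑ i, ‖x_i‖₂`. -/
noncomputable def bl1 {n p : ℕ} (x : Fin p × Fin n → ℝ) : ℝ :=
  ∑ i, bnorm x i

/-- Block-ℓ∞ norm: `‖x‖_{b∞} = max_i ‖x_i‖₂`. -/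
noncomputable def blinf {n p : ℕ} (x : Fin p × Fin n → ℝ) : ℝ :=
  ⨆ i, bnorm x i

open scoped Classical in
/-- Block support: indices of nonzero blocks. -/
noncomputable def bsupp {n p : ℕ} (x : Fin p × Fin n → ℝ) : Finset (Fin p) :=
  Finset.univ.filter (fun i => ∃ j, x (i, j) ≠ 0)

/-- `ω₂(A,s) = inf { ‖Az‖₂ / ‖z‖_{b∞} : z ≠ 0, ‖z‖_{b1} ≤ s ‖z‖_{b∞} }`. -/
noncomputable def omega2 {m n p : ℕ} (A : Matrix (Fin m) (Fin p × Fin n) ℝ) (s : ℝ) : ℝ :=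
  sInf {r | ∃ z : Fin p × Fin n → ℝ, z ≠ 0 ∧ bl1 z ≤ s * blinf z ∧
    r = vnorm (A.mulVec z) / blinf z}

/-- `ω_{b∞}(AᵀA,s) = inf { ‖AᵀAz‖_{b∞} / ‖z‖_{b∞} : z ≠ 0, ‖z‖_{b1} ≤ s ‖z‖_{b∞} }`. -/
noncomputable def omegaBInf {m n p : ℕ} (A : Matrix (Fin m) (Fin p × Fin n) ℝ) (s : ℝ) : ℝ :=
  sInf {r | ∃ z : Fin p × Fin n → ℝ, z ≠ 0 ∧ bl1 z ≤ s * blinf z ∧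
    r = blinf ((Aᵀ * A).mulVec z) / blinf z}

/-- Block ℓ1-constrained minimal singular value
`ρ_s(A) = inf { ‖Az‖₂ / ‖z‖₂ : z ≠ 0, ‖z‖_{b1}² ≤ s ‖z‖₂² }`. -/
noncomputable def rhoCMSV {m n p : ℕ} (A : Matrix (Fin m) (Fin p × Fin n) ℝ) (s : ℝ) : ℝ :=
  sInf {r | ∃ z : Fin p × Fin n → ℝ, z ≠ 0 ∧ (bl1 z) ^ 2 ≤ s * (vnorm z) ^ 2 ∧
    r = vnorm (A.mulVec z) / vnorm z}

/-- Spectral norm (largest singular value) of a real matrix, as the ℓ2→ℓ2 operator norm. -/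
noncomputable def specNorm {ι κ : Type*} [Fintype ι] [Fintype κ] (M : Matrix ι κ ℝ) : ℝ :=
  sSup {r | ∃ v : κ → ℝ, vnorm v ≤ 1 ∧ r = vnorm (M.mulVec v)}

/-- The `j`-th column block (of `n` columns) of a matrix with `np` columns. -/
def colBlock {ι : Type*} {n p : ℕ} (Q : Matrix ι (Fin p × Fin n) ℝ) (j : Fin p) :
    Matrix ι (Fin n) ℝ := Matrix.of fun r c => Q r (j, c)

/-- The `l`-th row block (of `n` rows) of a matrix with `np` rows. -/
def rowBlock {κ : Type*} {n p : ℕ} (P : Matrix (Fin p × Fin n) κ ℝ) (l : Fin p) :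
    Matrix (Fin n) κ ℝ := Matrix.of fun r c => P (l, r) c

/-- `δ_{ij} Iₙ`. -/
def deltaId (n : ℕ) {p : ℕ} (i j : Fin p) : Matrix (Fin n) (Fin n) ℝ :=
  if i = j then 1 else 0

/-- Orlicz ψ₂ norm of a scalar random variable. -/
noncomputable def psi2 {Ω : Type*} [MeasurableSpace Ω] (μ : Measure Ω) (Y : Ω → ℝ) : ℝ :=
  sInf {t | 0 < t ∧ ∫ ω, Real.exp ((Y ω) ^ 2 / t ^ 2) ∂μ ≤ 2}

/-!
Cauchy–Schwarz inside each block followed by Hölder across blocks gives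
`‖Az‖₂² = ⟨z, AᵀAz⟩ ≤ ‖z‖_{b1} ‖AᵀAz‖_{b∞} ≤ s ‖z‖_{b∞} ‖AᵀAz‖_{b∞}` on the feasible cone, and
dividing by `‖z‖_{b∞}²` bounds `ω₂(A,s)²` by `s` times every ratio defining `ω_{b∞}(AᵀA,s)`.
For the lower bound, `‖z‖_{b∞} ≤ ‖z‖₂` makes every `z` feasible for `ω₂(A,s)` feasible for
`ρ_{s²}(A)` with a ratio `‖Az‖₂/‖z‖₂` no larger. Both infima are over nonempty sets as soon as
`s ≥ 1`, since a vector supported on a single block has `‖z‖_{b1} = ‖z‖_{b∞}`.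
-/

section Norms

lemma vnorm_nonneg {ι : Type*} [Fintype ι] (v : ι → ℝ) : 0 ≤ vnorm v := Real.sqrt_nonneg _

lemma sq_vnorm {ι : Type*} [Fintype ι] (v : ι → ℝ) : vnorm v ^ 2 = ∑ i, v i ^ 2 :=
  Real.sq_sqrt (Finset.sum_nonneg fun _ _ => sq_nonneg _)

lemma sq_vnorm_mulVec {ι κ : Type*} [Fintype ι] [Fintype κ] (A : Matrix ι κ ℝ) (z : κ → ℝ) :
    vnorm (A *ᵥ z) ^ 2 = z ⬝ᵥ ((Aᵀ * A) *ᵥ z) := by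
  rw [sq_vnorm, ← mulVec_mulVec, dotProduct_mulVec, vecMul_transpose]
  simp only [dotProduct, sq]

variable {n p : ℕ}

lemma bnorm_nonneg (z : Fin p × Fin n → ℝ) (i : Fin p) : 0 ≤ bnorm z i := vnorm_nonneg _

lemma bnorm_le_blinf (z : Fin p × Fin n → ℝ) (i : Fin p) : bnorm z i ≤ blinf z :=
  le_ciSup (Set.finite_range _).bddAbove i

lemma bl1_nonneg (z : Fin p × Fin n → ℝ) : 0 ≤ bl1 z :=
  Finset.sum_nonneg fun i _ => bnorm_nonneg z i

lemma blinf_nonneg (z : Fin p × Fin n → ℝ) : 0 ≤ blinf z :=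
  Real.iSup_nonneg (bnorm_nonneg z)

lemma blinf_le_vnorm (z : Fin p × Fin n → ℝ) : blinf z ≤ vnorm z := by
  refine Real.iSup_le (fun i => Real.sqrt_le_sqrt ?_) (vnorm_nonneg z)
  rw [Fintype.sum_prod_type]
  exact Finset.single_le_sum (f := fun i => ∑ j, z (i, j) ^ 2)
    (fun i _ => Finset.sum_nonneg fun j _ => sq_nonneg _) (Finset.mem_univ i)

lemma blinf_pos {z : Fin p × Fin n → ℝ} (hz : z ≠ 0) : 0 < blinf z := by
  obtain ⟨⟨i, j⟩, hij⟩ := Function.ne_iff.mp hz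
  have hblock : 0 < ∑ j', z (i, j') ^ 2 :=
    (sq_pos_of_ne_zero hij).trans_le <|
      Finset.single_le_sum (f := fun j' => z (i, j') ^ 2) (fun _ _ => sq_nonneg _)
        (Finset.mem_univ j)
  exact (Real.sqrt_pos.mpr hblock).trans_le (bnorm_le_blinf z i)

lemma dotProduct_le_bl1_mul_blinf (x y : Fin p × Fin n → ℝ) : x ⬝ᵥ y ≤ bl1 x * blinf y := by
  rw [dotProduct, Fintype.sum_prod_type, bl1, Finset.sum_mul]
  gcongr with i
  calc ∑ j, x (i, j) * y (i, j) ≤ bnorm x i * bnorm y i :=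
        Real.sum_mul_le_sqrt_mul_sqrt _ _ _
    _ ≤ bnorm x i * blinf y := by gcongr; exacts [bnorm_nonneg x i, bnorm_le_blinf y i]

lemma sq_vnorm_mulVec_le_bl1_mul_blinf {ι : Type*} [Fintype ι] (A : Matrix ι (Fin p × Fin n) ℝ)
    (z : Fin p × Fin n → ℝ) : vnorm (A *ᵥ z) ^ 2 ≤ bl1 z * blinf ((Aᵀ * A) *ᵥ z) :=
  (sq_vnorm_mulVec A z).trans_le (dotProduct_le_bl1_mul_blinf _ _)

lemma bl1_single_le_blinf (x : Fin p × Fin n) (c : ℝ) :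
    bl1 (Pi.single x c) ≤ blinf (Pi.single x c) := by
  have hoff : ∀ i ≠ x.1, bnorm (Pi.single x c) i = 0 := fun i hi => by
    simp [bnorm, vnorm, Prod.ext_iff, hi]
  rw [bl1, Finset.sum_eq_single x.1 (fun i _ hi => hoff i hi) (by simp)]
  exact bnorm_le_blinf _ _

end Norms

section Infima

variable {m n p : ℕ} (A : Matrix (Fin m) (Fin p × Fin n) ℝ) {s : ℝ}

lemma sInf_setOf_ne_zero_of_isEmpty {ι : Type*} [IsEmpty ι] (P : (ι → ℝ) → Prop)
    (f : (ι → ℝ) → ℝ) : sInf {r | ∃ z : ι → ℝ, z ≠ 0 ∧ P z ∧ r = f z} = 0 := by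
  convert Real.sInf_empty
  exact Set.eq_empty_of_forall_notMem fun r ⟨z, hz, _⟩ => hz (Subsingleton.elim z 0)

lemma exists_ne_zero_bl1_le_mul_blinf [Nonempty (Fin p × Fin n)] (hs : 1 ≤ s) :
    ∃ z : Fin p × Fin n → ℝ, z ≠ 0 ∧ bl1 z ≤ s * blinf z := by
  obtain ⟨x⟩ := ‹Nonempty (Fin p × Fin n)›
  refine ⟨Pi.single x 1, by simp, (bl1_single_le_blinf x 1).trans ?_⟩
  exact le_mul_of_one_le_left (blinf_nonneg _) hs

lemma omega2_nonneg : 0 ≤ omega2 A s :=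
  Real.sInf_nonneg fun _ ⟨_, _, _, hr⟩ => hr ▸ div_nonneg (vnorm_nonneg _) (blinf_nonneg _)

lemma omegaBInf_nonneg : 0 ≤ omegaBInf A s :=
  Real.sInf_nonneg fun _ ⟨_, _, _, hr⟩ => hr ▸ div_nonneg (blinf_nonneg _) (blinf_nonneg _)

lemma omega2_le {z : Fin p × Fin n → ℝ} (hz : z ≠ 0) (hzs : bl1 z ≤ s * blinf z) :
    omega2 A s ≤ vnorm (A *ᵥ z) / blinf z :=
  csInf_le ⟨0, fun _ ⟨_, _, _, hr⟩ => hr ▸ div_nonneg (vnorm_nonneg _) (blinf_nonneg _)⟩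
    ⟨z, hz, hzs, rfl⟩

lemma rhoCMSV_le {t : ℝ} {z : Fin p × Fin n → ℝ} (hz : z ≠ 0) (hzt : bl1 z ^ 2 ≤ t * vnorm z ^ 2) :
    rhoCMSV A t ≤ vnorm (A *ᵥ z) / vnorm z :=
  csInf_le ⟨0, fun _ ⟨_, _, _, hr⟩ => hr ▸ div_nonneg (vnorm_nonneg _) (vnorm_nonneg _)⟩
    ⟨z, hz, hzt, rfl⟩

lemma rhoCMSV_sq_le_omega2 (hs : 1 ≤ s) : rhoCMSV A (s ^ 2) ≤ omega2 A s := by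
  rcases isEmpty_or_nonempty (Fin p × Fin n) with hempty | hnonempty
  · exact (sInf_setOf_ne_zero_of_isEmpty _ _).trans_le (omega2_nonneg A)
  obtain ⟨z₀, hz₀, hz₀s⟩ := exists_ne_zero_bl1_le_mul_blinf (n := n) (p := p) hs
  refine le_csInf ⟨_, z₀, hz₀, hz₀s, rfl⟩ fun _ ⟨z, hz, hzs, hr⟩ => hr ▸ ?_
  have hzt : bl1 z ≤ s * vnorm z :=
    hzs.trans (mul_le_mul_of_nonneg_left (blinf_le_vnorm z) (by linarith))
  calc rhoCMSV A (s ^ 2) ≤ vnorm (A *ᵥ z) / vnorm z :=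
        rhoCMSV_le A hz (by rw [← mul_pow]; gcongr; exact bl1_nonneg z)
    _ ≤ vnorm (A *ᵥ z) / blinf z :=
        div_le_div_of_nonneg_left (vnorm_nonneg _) (blinf_pos hz) (blinf_le_vnorm z)

lemma sq_omega2_le_mul_omegaBInf (hs : 1 ≤ s) : omega2 A s ^ 2 ≤ s * omegaBInf A s := by
  have hs₀ : 0 < s := zero_lt_one.trans_le hs
  rcases isEmpty_or_nonempty (Fin p × Fin n) with hempty | hnonempty
  · rw [omega2, sInf_setOf_ne_zero_of_isEmpty]
    simpa using mul_nonneg hs₀.le (omegaBInf_nonneg A)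
  obtain ⟨z₀, hz₀, hz₀s⟩ := exists_ne_zero_bl1_le_mul_blinf (n := n) (p := p) hs
  rw [← div_le_iff₀' hs₀]
  refine le_csInf ⟨_, z₀, hz₀, hz₀s, rfl⟩ fun _ ⟨z, hz, hzs, hr⟩ => hr ▸ ?_
  set w := (Aᵀ * A) *ᵥ z
  have hz_pos := blinf_pos hz
  have hAz : omega2 A s * blinf z ≤ vnorm (A *ᵥ z) :=
    (le_div_iff₀ hz_pos).mp (omega2_le A hz hzs)
  rw [div_le_div_iff₀ hs₀ hz_pos]
  refine le_of_mul_le_mul_right ?_ hz_pos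
  calc omega2 A s ^ 2 * blinf z * blinf z = (omega2 A s * blinf z) ^ 2 := by ring
    _ ≤ vnorm (A *ᵥ z) ^ 2 := by gcongr; exact mul_nonneg (omega2_nonneg A) hz_pos.le
    _ ≤ bl1 z * blinf w := sq_vnorm_mulVec_le_bl1_mul_blinf A z
    _ ≤ s * blinf z * blinf w := by gcongr; exact blinf_nonneg w
    _ = blinf w * s * blinf z := by ring

end Infima

/-- Lemma 1: `√s √(ω_{b∞}(AᵀA,s)) ≥ ω₂(A,s) ≥ ρ_{s²}(A)`; equivalently
`ω₂(A,s)² ≤ s ω_{b∞}(AᵀA,s)` and `ω₂(A,s) ≥ ρ_{s²}(A)`. -/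
theorem stmt9 {m n p : ℕ} (A : Matrix (Fin m) (Fin p × Fin n) ℝ) (s : ℝ) (hs : 1 ≤ s) :
    (omega2 A s ≤ Real.sqrt s * Real.sqrt (omegaBInf A s) ∧ rhoCMSV A (s ^ 2) ≤ omega2 A s) ∧
    ((omega2 A s) ^ 2 ≤ s * omegaBInf A s ∧ rhoCMSV A (s ^ 2) ≤ omega2 A s) := by
  have hsq := sq_omega2_le_mul_omegaBInf A hs
  have hrho := rhoCMSV_sq_le_omega2 A hs
  refine ⟨⟨?_, hrho⟩, hsq, hrho⟩
  rw [← Real.sqrt_mul (by linarith)]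
  exact Real.le_sqrt_of_sq_le hsq
end

section
/- Let Q = A ∈ ℝ^{m×np} with column blocks Q = [Q₁,…,Q_p], Q_j ∈ ℝ^{m×n}. Fix s ≥ 1 and η ≥ 0, and let z ∈ ℝ^{np} satisfy ‖Az‖₂ ≤ 1 and ‖z‖_{b1} ≤ sη. Then for every index i ∈ {1,…,p} and every matrix P_i ∈ ℝ^{m×n}, the i-th block of z satisfies ‖z_i‖₂ ≤ sη · max_{1≤j≤p} ‖δ_{ij} I_n − P_iᵀ Q_j‖₂ + ‖P_i‖₂, where ‖·‖₂ on matrices is the spectral norm. Consequently, f_s(η) := sup{‖z‖_{b∞} : ‖Az‖₂ ≤ 1, ‖z‖_{b1} ≤ sη} ≤ max_i inf_{P_i} ( sη · max_j ‖δ_{ij} I_n − P_iᵀ Q_j‖₂ + ‖P_i‖₂ ). -/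
open MeasureTheory ProbabilityTheory Finset Matrix

/-! Writing `z_i = ∑_j (δ_{ij} Iₙ - Pᵀ Q_j) z_j + Pᵀ (Q z)` and bounding each term by the spectral
norm gives `‖z_i‖₂ ≤ (max_j ‖δ_{ij} Iₙ - Pᵀ Q_j‖₂) ‖z‖_{b1} + ‖P‖₂ ‖Q z‖₂`; the bound on `f_s(η)`
follows by taking the infimum over `P` and the maximum over `i`. -/

section SpectralNorm

open scoped Matrix.Norms.L2Operator

variable {ι κ : Type*} [Fintype ι] [Fintype κ]

lemma vnorm_eq_norm_toLp (v : ι → ℝ) : vnorm v = ‖WithLp.toLp 2 v‖ := by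
  simp [vnorm, EuclideanSpace.norm_eq, sq_abs]

lemma vnorm_add_le (v w : ι → ℝ) : vnorm (v + w) ≤ vnorm v + vnorm w := by
  simpa only [vnorm_eq_norm_toLp, WithLp.toLp_add] using norm_add_le _ _

lemma vnorm_sum_le (w : κ → ι → ℝ) : vnorm (∑ j, w j) ≤ ∑ j, vnorm (w j) := by
  simpa only [vnorm_eq_norm_toLp, WithLp.toLp_sum] using norm_sum_le _ _

lemma specNorm_eq_l2_opNorm [DecidableEq κ] (M : Matrix ι κ ℝ) : specNorm M = ‖M‖ := by
  rw [Matrix.l2_opNorm_def, ← ContinuousLinearMap.sSup_unitClosedBall_eq_norm, specNorm]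
  congr 1
  ext r
  constructor
  · rintro ⟨v, hv, rfl⟩
    exact ⟨WithLp.toLp 2 v, by simpa [vnorm_eq_norm_toLp] using hv, by simp [vnorm_eq_norm_toLp]⟩
  · rintro ⟨x, hx, rfl⟩
    exact ⟨x.ofLp, by simpa [vnorm_eq_norm_toLp] using hx, by rw [vnorm_eq_norm_toLp]; rfl⟩

lemma specNorm_nonneg [DecidableEq κ] (M : Matrix ι κ ℝ) : 0 ≤ specNorm M :=
  specNorm_eq_l2_opNorm M ▸ norm_nonneg M

lemma specNorm_transpose [DecidableEq ι] [DecidableEq κ] (M : Matrix ι κ ℝ) :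
    specNorm Mᵀ = specNorm M := by
  rw [specNorm_eq_l2_opNorm, specNorm_eq_l2_opNorm, ← Matrix.conjTranspose_eq_transpose_of_trivial,
    Matrix.l2_opNorm_conjTranspose]

lemma vnorm_mulVec_le [DecidableEq κ] (M : Matrix ι κ ℝ) (v : κ → ℝ) :
    vnorm (M *ᵥ v) ≤ specNorm M * vnorm v := by
  rw [specNorm_eq_l2_opNorm, vnorm_eq_norm_toLp, vnorm_eq_norm_toLp]
  exact Matrix.l2_opNorm_mulVec M (WithLp.toLp 2 v)

end SpectralNorm

section Blocks

lemma sum_colBlock_mulVec {ι : Type*} {n p : ℕ} (Q : Matrix ι (Fin p × Fin n) ℝ)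
    (z : Fin p × Fin n → ℝ) :
    ∑ j, colBlock Q j *ᵥ (fun k => z (j, k)) = Q *ᵥ z := by
  ext r
  simp [Matrix.mulVec, dotProduct, colBlock, Fintype.sum_prod_type]

variable {ι : Type*} [Fintype ι] {n p : ℕ}

lemma block_eq_sum_add (Q : Matrix ι (Fin p × Fin n) ℝ) (z : Fin p × Fin n → ℝ) (i : Fin p)
    (P : Matrix ι (Fin n) ℝ) :
    (fun k => z (i, k)) =
      ∑ j, (deltaId n i j - Pᵀ * colBlock Q j) *ᵥ (fun k => z (j, k)) + Pᵀ *ᵥ (Q *ᵥ z) := by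
  have hdelta : ∑ j, deltaId n i j *ᵥ (fun k => z (j, k)) = fun k => z (i, k) := by
    rw [Finset.sum_eq_single_of_mem i (Finset.mem_univ i)]
    · simp [deltaId]
    · intro j _ hj
      simp [deltaId, Ne.symm hj]
  have hP : ∑ j, (Pᵀ * colBlock Q j) *ᵥ (fun k => z (j, k)) = Pᵀ *ᵥ (Q *ᵥ z) := by
    simp only [← Matrix.mulVec_mulVec, ← Matrix.mulVec_sum, sum_colBlock_mulVec]
  simp only [Matrix.sub_mulVec, Finset.sum_sub_distrib, hdelta, hP, sub_add_cancel]

theorem bnorm_le_iSup_mul_bl1_add (Q : Matrix ι (Fin p × Fin n) ℝ) (z : Fin p × Fin n → ℝ)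
    (i : Fin p) (P : Matrix ι (Fin n) ℝ) :
    bnorm z i ≤ (⨆ j, specNorm (deltaId n i j - Pᵀ * colBlock Q j)) * bl1 z +
      specNorm P * vnorm (Q *ᵥ z) := by
  classical
  set S := ⨆ j, specNorm (deltaId n i j - Pᵀ * colBlock Q j)
  have hS : ∀ j, specNorm (deltaId n i j - Pᵀ * colBlock Q j) ≤ S := fun j =>
    le_ciSup (f := fun j => specNorm (deltaId n i j - Pᵀ * colBlock Q j))
      (Set.finite_range _).bddAbove j
  calc bnorm z i
      ≤ ∑ j, vnorm ((deltaId n i j - Pᵀ * colBlock Q j) *ᵥ (fun k => z (j, k))) +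
          vnorm (Pᵀ *ᵥ (Q *ᵥ z)) := by
        rw [bnorm, block_eq_sum_add Q z i P]
        exact (vnorm_add_le _ _).trans (add_le_add_left (vnorm_sum_le _) _)
    _ ≤ ∑ j, S * bnorm z j + specNorm P * vnorm (Q *ᵥ z) := by
        gcongr with j
        · exact (vnorm_mulVec_le _ _).trans
            (mul_le_mul_of_nonneg_right (hS j) (Real.sqrt_nonneg _))
        · exact specNorm_transpose P ▸ vnorm_mulVec_le _ _
    _ = S * bl1 z + specNorm P * vnorm (Q *ᵥ z) := by rw [bl1, Finset.mul_sum]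

variable {c : ℝ} {Q : Matrix ι (Fin p × Fin n) ℝ} {z : Fin p × Fin n → ℝ}

lemma bnorm_le_of_vnorm_mulVec_le_one (hQz : vnorm (Q *ᵥ z) ≤ 1) (hz : bl1 z ≤ c) (i : Fin p)
    (P : Matrix ι (Fin n) ℝ) :
    bnorm z i ≤ c * (⨆ j, specNorm (deltaId n i j - Pᵀ * colBlock Q j)) + specNorm P := by
  have hS : 0 ≤ ⨆ j, specNorm (deltaId n i j - Pᵀ * colBlock Q j) :=
    Real.iSup_nonneg fun _ => specNorm_nonneg _
  calc bnorm z i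
      ≤ (⨆ j, specNorm (deltaId n i j - Pᵀ * colBlock Q j)) * bl1 z +
          specNorm P * vnorm (Q *ᵥ z) := bnorm_le_iSup_mul_bl1_add Q z i P
    _ ≤ (⨆ j, specNorm (deltaId n i j - Pᵀ * colBlock Q j)) * c + specNorm P * 1 := by
        gcongr
        exact specNorm_nonneg P
    _ = _ := by ring

lemma blinf_le_iSup_sInf (hQz : vnorm (Q *ᵥ z) ≤ 1) (hz : bl1 z ≤ c) :
    blinf z ≤ ⨆ i : Fin p, sInf {r | ∃ P : Matrix ι (Fin n) ℝ,
      r = c * (⨆ j, specNorm (deltaId n i j - Pᵀ * colBlock Q j)) + specNorm P} := by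
  refine ciSup_mono (Set.finite_range _).bddAbove fun i => le_csInf ⟨_, 0, rfl⟩ ?_
  rintro _ ⟨P, rfl⟩
  exact bnorm_le_of_vnorm_mulVec_le_one hQz hz i P

end Blocks

theorem stmt16_general {m n p : ℕ} (A : Matrix (Fin m) (Fin p × Fin n) ℝ) (s η : ℝ)
    (z : Fin p × Fin n → ℝ)
    (hz1 : vnorm (A.mulVec z) ≤ 1) (hz2 : bl1 z ≤ s * η) :
    (∀ (i : Fin p) (P : Matrix (Fin m) (Fin n) ℝ),
      bnorm z i ≤
        s * η * (⨆ j : Fin p, specNorm (deltaId n i j - Pᵀ * colBlock A j)) + specNorm P) ∧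
    sSup {r | ∃ z' : Fin p × Fin n → ℝ,
        vnorm (A.mulVec z') ≤ 1 ∧ bl1 z' ≤ s * η ∧ r = blinf z'} ≤
      ⨆ i : Fin p, sInf {r | ∃ P : Matrix (Fin m) (Fin n) ℝ,
        r = s * η * (⨆ j : Fin p, specNorm (deltaId n i j - Pᵀ * colBlock A j)) +
          specNorm P} := by
  refine ⟨bnorm_le_of_vnorm_mulVec_le_one hz1 hz2, csSup_le ⟨_, z, hz1, hz2, rfl⟩ ?_⟩
  rintro _ ⟨z', hz'1, hz'2, rfl⟩
  exact blinf_le_iSup_sInf hz'1 hz'2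

/-- Proposition 4, case `Q = A`, `⋄ = 2`: if `‖Az‖₂ ≤ 1` and
`‖z‖_{b1} ≤ sη`, then for every `i` and every `P_i ∈ ℝ^{m×n}`,
`‖z_i‖₂ ≤ sη max_j ‖δ_{ij} Iₙ - P_iᵀ A_j‖₂ + ‖P_i‖₂`; consequently
`f_s(η) ≤ max_i inf_{P_i} (sη max_j ‖δ_{ij} Iₙ - P_iᵀ A_j‖₂ + ‖P_i‖₂)`. -/
theorem stmt16 {m n p : ℕ} (A : Matrix (Fin m) (Fin p × Fin n) ℝ) (s η : ℝ)
    (hs : 1 ≤ s) (hη : 0 ≤ η)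
    (z : Fin p × Fin n → ℝ)
    (hz1 : vnorm (A.mulVec z) ≤ 1) (hz2 : bl1 z ≤ s * η) :
    (∀ (i : Fin p) (P : Matrix (Fin m) (Fin n) ℝ),
      bnorm z i ≤
        s * η * (⨆ j : Fin p, specNorm (deltaId n i j - Pᵀ * colBlock A j)) + specNorm P) ∧
    sSup {r | ∃ z' : Fin p × Fin n → ℝ,
        vnorm (A.mulVec z') ≤ 1 ∧ bl1 z' ≤ s * η ∧ r = blinf z'} ≤
      ⨆ i : Fin p, sInf {r | ∃ P : Matrix (Fin m) (Fin n) ℝ,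
        r = s * η * (⨆ j : Fin p, specNorm (deltaId n i j - Pᵀ * colBlock A j)) +
          specNorm P} :=
  stmt16_general A s η z hz1 hz2
end
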